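/- Minimality of the removal candidate in the TS queue (Lemma 1): for every interpretation ℓ of logical variables and every configuration κ = (s, (E,R), G_ts) satisfying the assertion isCand — namely, there exists CAND = enqOf(E, G_ts, s(cand_tid), s(cand_ts)) such that ∀e' ∈ seen(κ, DEQ), ¬(G_ts(e') <_TS G_ts(CAND)); if CAND ∈ InQ(s,E,G_ts) then CAND ∈ seen(κ, DEQ); and s(cand_pid) ≠ NULL — as well as the invariant properties INV_ALG(i) and INV_WF(iv) below, if CAND = enqOf(E, G_ts, s(cand_tid), s(cand_ts)) and CAND ∈ InQ(s,E,G_ts), then for every e ∈ InQ(s,E,G_ts) whose thread belongs to A, ¬(e R CAND), where DEQ is the current dequeue event. -/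
import Mathlib


/-- Operations of the TS queue. -/
inductive QOp where
  | enq
  | deq
deriving DecidableEq

/-- A configuration of the TS queue: the per-thread pools, the current
thread's local variables (`start_ts`, `cand_pid`, `cand_tid`, `cand_ts`, and
the set `A` of visited threads), an abstract history `(E, R)` (event
identifiers with their threads, operations and completion status, and the
real-time order), and the ghost timestamp map `G_ts`. -/
structure TSConfig (ThreadID EventID TS PoolID Val : Type) where
  pools : ThreadID → List (PoolID × Val × TS)
  startTs : TS
  candPid : Option PoolID
  candTid : ThreadID
  candTs : TS
  visited : Set ThreadID
  ids : Set EventID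
  tid : EventID → ThreadID
  op : EventID → QOp
  completed : EventID → Prop
  rt : EventID → EventID → Prop
  Gts : EventID → Option TS

variable {ThreadID EventID TS PoolID Val : Type}

/-- `InQ(s, E, G_ts)`: the enqueue events whose values are currently in the
pools (`e = enqOf(E, G_ts, t, τ)` for a timestamp `τ` occurring in `t`'s pool). -/
def inQ (κ : TSConfig ThreadID EventID TS PoolID Val) : Set EventID :=
  { e | e ∈ κ.ids ∧ κ.op e = QOp.enq ∧
        ∃ τ, κ.Gts e = some τ ∧ ∃ p v, (p, v, τ) ∈ κ.pools (κ.tid e) }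

/-- `seen(κ, d)`: the enqueue events with values in the pools that the
dequeue `d` has seen — completed, in `InQ`, ordered before `d`, with
timestamp not greater than `start_ts`, and belonging to a visited thread. -/
def seen (lt : TS → TS → Prop) (κ : TSConfig ThreadID EventID TS PoolID Val)
    (d : EventID) : Set EventID :=
  { e | e ∈ inQ κ ∧ κ.completed e ∧ κ.rt e d ∧
        (∃ τ, κ.Gts e = some τ ∧ ¬ lt κ.startTs τ) ∧ κ.tid e ∈ κ.visited }

/-- **Minimality of the removal candidate in the TS queue (Lemma 1 of the
paper).** In every configuration satisfying the assertion `isCand` and the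
invariants `INV_ALG(i)` and `INV_WF(iv)` (together with history
well-formedness, per-thread injectivity of `G_ts` (`INV_WF(iii)`) and the
ordering properties of timestamps), if the candidate `CAND` is still in the
pools, then no enqueue event whose value is in the pools and whose thread has
been visited precedes `CAND` in the real-time order. -/
theorem ts_queue_cand_minimal
    {ThreadID EventID TS PoolID Val : Type}
    (lt : TS → TS → Prop) (top : TS)
    (hlt_irrefl : ∀ τ, ¬ lt τ τ)
    (hlt_trans : ∀ τ1 τ2 τ3, lt τ1 τ2 → lt τ2 τ3 → lt τ1 τ3)
    (htop : ∀ τ, τ ≠ top → lt τ top)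
    (κ : TSConfig ThreadID EventID TS PoolID Val)
    -- history well-formedness: R transitive, irreflexive, uncompleted maximal
    (hrt_trans : ∀ a b c, κ.rt a b → κ.rt b c → κ.rt a c)
    (hrt_irrefl : ∀ a, ¬ κ.rt a a)
    (hmax : ∀ i ∈ κ.ids, ¬ κ.completed i → ∀ j, ¬ κ.rt i j)
    -- INV_ALG(i): enqueues of values in the pools are ordered only if so are
    -- their timestamps
    (hALGi : ∀ e ∈ inQ κ, ∀ e' ∈ inQ κ, κ.rt e e' →
        ∃ τ τ', κ.Gts e = some τ ∧ κ.Gts e' = some τ' ∧ lt τ τ')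
    -- INV_WF(iii): G_ts is injective on the events of each thread
    (hWFiii : ∀ e e', e ∈ κ.ids → e' ∈ κ.ids → e ≠ e' → κ.tid e = κ.tid e' →
        ∀ τ, κ.Gts e = some τ → κ.Gts e' ≠ some τ)
    -- INV_WF(iv): an enqueue event is uncompleted iff its timestamp is
    -- undefined or ⊤
    (hWFiv : ∀ e ∈ κ.ids, κ.op e = QOp.enq →
        (¬ κ.completed e ↔ (κ.Gts e = none ∨ κ.Gts e = some top)))
    -- the dequeue has generated a non-maximal timestamp
    (hstart : lt κ.startTs top)
    -- the current dequeue event DEQ and the candidate CAND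
    (DEQ CAND : EventID)
    (hDEQ : DEQ ∈ κ.ids ∧ κ.op DEQ = QOp.deq)
    -- CAND = enqOf(E, G_ts, s(cand_tid), s(cand_ts))
    (hCAND : CAND ∈ κ.ids ∧ κ.op CAND = QOp.enq ∧
        κ.tid CAND = κ.candTid ∧ κ.Gts CAND = some κ.candTs)
    -- isCand: minTS(CAND) ...
    (hminTS : ∀ e' ∈ seen lt κ DEQ, ∀ τ', κ.Gts e' = some τ' → ¬ lt τ' κ.candTs)
    -- ... CAND is seen as long as its value remains in the pools ...
    (hseenCAND : CAND ∈ inQ κ → CAND ∈ seen lt κ DEQ)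
    -- ... and a candidate has been chosen
    (hpid : κ.candPid ≠ none)
    -- CAND's value is still in the pools
    (hin : CAND ∈ inQ κ) :
    ∀ e ∈ inQ κ, κ.tid e ∈ κ.visited → ¬ κ.rt e CAND := by
  intro e heQ hvis hrt
  obtain ⟨τ, τ', hGe, hGc, hlt⟩ := hALGi e heQ CAND hin hrt
  have hcseen := hseenCAND hin
  obtain ⟨_, _, hrtCD, ⟨τc, hGc', hns⟩, _⟩ := hcseen
  have hτc : τc = κ.candTs := by
    rw [hCAND.2.2.2] at hGc'; exact (Option.some.inj hGc').symm
  subst hτc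
  have hτ' : τ' = κ.candTs := by
    rw [hCAND.2.2.2] at hGc; exact (Option.some.inj hGc).symm
  subst hτ'
  have hcomp : κ.completed e := by
    by_contra hnc
    exact hmax e heQ.1 hnc CAND hrt
  have heseen : e ∈ seen lt κ DEQ := by
    refine ⟨heQ, hcomp, hrt_trans _ _ _ hrt hrtCD, ⟨τ, hGe, ?_⟩, hvis⟩
    intro hs
    exact hns (hlt_trans _ _ _ hs hlt)
  exact hminTS e heseen τ hGe hlt
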